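/- arXiv:1410.5085 — 5 statements merged into one kernel-verified Lean document; each statement's English description precedes it below -/
import Mathlib

section
/- Let h_A1, h_BA, h_AB be real numbers with 1 ≤ h_BA ≤ h_A1 and 0 ≤ h_AB ≤ h_A1. Then log₂(1 + (1 − h_BA²/h_A1²)·h_A1²/(1 + 2·h_BA²)) ≥ log₂(1 + h_AB²) − log₂(1 + h_BA²) − 1. -/
open Real

/-- Verification of the rate bound (r10) in Theorem 2 for the two-way
Gaussian relay channel: the auxiliary message rate bound is within the
claimed gap. -/
theorem r10_gap (hA1 hBA hAB : ℝ)
    (h1 : 1 ≤ hBA) (h2 : hBA ≤ hA1) (h3 : 0 ≤ hAB) (h4 : hAB ≤ hA1) :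
    logb 2 (1 + (1 - hBA ^ 2 / hA1 ^ 2) * hA1 ^ 2 / (1 + 2 * hBA ^ 2)) ≥
      logb 2 (1 + hAB ^ 2) - logb 2 (1 + hBA ^ 2) - 1 := by
  have hA1pos : (0:ℝ) < hA1 := by linarith
  have hBApos : (0:ℝ) < hBA := by linarith
  have hd : (0:ℝ) < 1 + 2 * hBA ^ 2 := by positivity
  have key : 1 + (1 - hBA ^ 2 / hA1 ^ 2) * hA1 ^ 2 / (1 + 2 * hBA ^ 2)
      = (1 + hBA ^ 2 + hA1 ^ 2) / (1 + 2 * hBA ^ 2) := by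
    field_simp
    ring
  rw [key]
  have h1' : (0:ℝ) < 1 + hAB ^ 2 := by positivity
  have h2' : (0:ℝ) < 1 + hBA ^ 2 := by positivity
  have hrw : logb 2 (1 + hAB ^ 2) - logb 2 (1 + hBA ^ 2) - 1
      = logb 2 ((1 + hAB ^ 2) / ((1 + hBA ^ 2) * 2)) := by
    rw [Real.logb_div (by positivity) (by positivity),
      Real.logb_mul (by positivity) (by norm_num)]
    simp [Real.logb_self_eq_one]
    ring
  rw [hrw, ge_iff_le]
  apply Real.logb_le_logb_of_le (by norm_num)
  · positivity
  · rw [div_le_div_iff₀ (by positivity) hd]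
    nlinarith [sq_nonneg hBA, sq_nonneg (hBA^2), mul_self_nonneg hAB,
      mul_le_mul h4 h4 h3 (le_of_lt hA1pos)]
end

section
/- Let h_A1, h_B1, h_1A, h_1B be real numbers, each at least 1. Set h_AB = min{h_A1, h_1B}, h_BA = min{h_B1, h_1A}, and h₁ = min{h_1A, h_1B}, and assume h_BA ≤ h_AB. Then (1 + h₁²)(h_BA² − 1)/(h₁²·(1 + h_BA²)) ≤ (2(1 + h_1B²)(1 + h_BA²) − (1 + h_AB²)) / (2·h_1B²·(1 + h_BA²)). -/
/-- The power allocation `α₂ = f(h₁)` used at the relay in the two-way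
Gaussian relay channel of Theorem 2 satisfies the decoding condition (rc). -/
theorem alpha_satisfies_rc (hA1 hB1 h1A h1B : ℝ)
    (hhA1 : 1 ≤ hA1) (hhB1 : 1 ≤ hB1) (hh1A : 1 ≤ h1A) (hh1B : 1 ≤ h1B)
    (hle : min hB1 h1A ≤ min hA1 h1B) :
    (1 + (min h1A h1B) ^ 2) * ((min hB1 h1A) ^ 2 - 1) /
        ((min h1A h1B) ^ 2 * (1 + (min hB1 h1A) ^ 2)) ≤
      (2 * (1 + h1B ^ 2) * (1 + (min hB1 h1A) ^ 2) - (1 + (min hA1 h1B) ^ 2)) /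
        (2 * h1B ^ 2 * (1 + (min hB1 h1A) ^ 2)) := by
  set b := min hB1 h1A with hbdef
  set a := min hA1 h1B with hadef
  set h := min h1A h1B with hhdef
  have hb1 : 1 ≤ b := le_min hhB1 hh1A
  have ha1 : 1 ≤ a := le_min hhA1 hh1B
  have hh1 : 1 ≤ h := le_min hh1A hh1B
  have hab : a ≤ h1B := min_le_right _ _
  have hbh : b ≤ h := by
    rcases le_total h1A h1B with c | c
    · have : h = h1A := min_eq_left c
      rw [this]; exact min_le_right _ _
    · have : h = h1B := min_eq_right c
      rw [this]; exact le_trans hle (min_le_right _ _)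
  have hbpos : (0:ℝ) < b := lt_of_lt_of_le one_pos hb1
  have hhpos : (0:ℝ) < h := lt_of_lt_of_le one_pos hh1
  have hBpos : (0:ℝ) < h1B := lt_of_lt_of_le one_pos hh1B
  have hb2 : b ^ 2 ≤ h ^ 2 := by nlinarith
  have ha2 : a ^ 2 ≤ h1B ^ 2 := by nlinarith
  rw [div_le_div_iff₀ (by positivity) (by positivity)]
  nlinarith [mul_pos hhpos hhpos, mul_pos hBpos hBpos, sq_nonneg (b*h1B),
    mul_nonneg (mul_nonneg (sq_nonneg h1B) (sq_nonneg b)) (sq_nonneg b),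
    mul_le_mul_of_nonneg_left hb2 (mul_nonneg (sq_nonneg h1B) (sq_nonneg b)),
    mul_le_mul_of_nonneg_left ha2 (mul_nonneg (sq_nonneg h) (sq_nonneg b)),
    mul_le_mul_of_nonneg_left hb2 (sq_nonneg h1B),
    mul_le_mul_of_nonneg_left ha2 (sq_nonneg h),
    sq_nonneg (h*b), sq_nonneg h, sq_nonneg b]
end

section
/- Let h_A1, h_B1, h_1A, h_1B be real numbers, each at least 1. Set h_AB = min{h_A1, h_1B} and h_BA = min{h_B1, h_1A}, and assume h_BA ≤ h_AB. Then there exists a real number α with 0 ≤ α ≤ 1 such that: (i) log₂(1 + α·h_1B²/(1 + (1 − α)·h_1B²)) ≥ log₂(1 + h_BA²) − 1; (ii) log₂(1 + α·h_1A²/(1 + (1 − α)·h_1A²)) ≥ log₂(1 + h_BA²) − 1; and (iii) log₂(1 + (1 − α)·h_1B²) ≥ log₂(1 + h_AB²) − log₂(1 + h_BA²) − 1. -/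
open Real

/-! Take `α = 1 - 1 / h_BA²`, so that the interference power `(1 - α) h_BA²` equals the noise
power. Since `1 + α X / (1 + (1 - α) X) = (1 + X) / (1 + X / h_BA²)`, conditions (i) and (ii) ask
for `(1 + h_BA²)(1 + X / h_BA²) ≤ 2 (1 + X)` with `X ≥ h_BA² ≥ 1`, which is
`(h_BA² - 1)(X - h_BA²) ≥ 0`. Condition (iii) follows from
`(1 + h_BA²)(1 + h_1B² / h_BA²) ≥ 1 + h_1B² ≥ 1 + h_AB²`. -/

lemma logb_two_sub_one_le_of_le_two_mul {x y : ℝ} (hy : 0 < y) (h : y ≤ 2 * x) :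
    logb 2 y - 1 ≤ logb 2 x := by
  calc logb 2 y - 1 = logb 2 (y / 2) := by
        rw [logb_div hy.ne' two_ne_zero, logb_self_eq_one one_lt_two]
    _ ≤ logb 2 x := logb_le_logb_of_le one_lt_two (by positivity) (by linarith)

lemma logb_two_sub_logb_two_sub_one_le {x y z : ℝ} (hy : 0 < y) (hz : 0 < z)
    (h : y ≤ 2 * z * x) : logb 2 y - logb 2 z - 1 ≤ logb 2 x := by
  rw [← logb_div hy.ne' hz.ne']
  refine logb_two_sub_one_le_of_le_two_mul (by positivity) ?_
  rw [div_le_iff₀ hz]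
  linarith

lemma one_add_le_two_mul_one_add_sinr {α c X : ℝ} (hα : (1 - α) * c = 1) (hc : 1 ≤ c)
    (hcX : c ≤ X) : 1 + c ≤ 2 * (1 + α * X / (1 + (1 - α) * X)) := by
  have hβ : 0 < 1 - α := by nlinarith
  have hden : 0 < 1 + (1 - α) * X := by nlinarith
  rw [one_add_div hden.ne', mul_div_assoc', le_div_iff₀ hden]
  nlinarith [mul_nonneg hβ.le (mul_nonneg (sub_nonneg.2 hc) (sub_nonneg.2 hcX))]

lemma one_add_le_two_mul_one_add_mul_one_add {α c X y : ℝ} (hα : (1 - α) * c = 1)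
    (hc : 0 < c) (hX : 0 ≤ X) (hyX : y ≤ X) :
    1 + y ≤ 2 * (1 + c) * (1 + (1 - α) * X) := by
  have hβ : 0 < 1 - α := by nlinarith
  nlinarith [mul_nonneg hβ.le hX]

theorem exists_alpha_downlink_general (hA1 hB1 h1A h1B : ℝ)
    (hhB1 : 1 ≤ hB1) (hh1A : 1 ≤ h1A)
    (hle : min hB1 h1A ≤ min hA1 h1B) :
    ∃ α : ℝ, 0 ≤ α ∧ α ≤ 1 ∧
      logb 2 (1 + α * h1B ^ 2 / (1 + (1 - α) * h1B ^ 2)) ≥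
        logb 2 (1 + (min hB1 h1A) ^ 2) - 1 ∧
      logb 2 (1 + α * h1A ^ 2 / (1 + (1 - α) * h1A ^ 2)) ≥
        logb 2 (1 + (min hB1 h1A) ^ 2) - 1 ∧
      logb 2 (1 + (1 - α) * h1B ^ 2) ≥
        logb 2 (1 + (min hA1 h1B) ^ 2) - logb 2 (1 + (min hB1 h1A) ^ 2) - 1 := by
  set b := min hB1 h1A
  set a := min hA1 h1B
  have hb : 1 ≤ b := le_min hhB1 hh1A
  have hb2 : 1 ≤ b ^ 2 := one_le_pow₀ hb
  have ha : 0 ≤ a := by linarith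
  have haB : a ≤ h1B := min_le_right _ _
  have hα : (1 - (1 - (b ^ 2)⁻¹)) * b ^ 2 = 1 := by
    rw [sub_sub_cancel, inv_mul_cancel₀ (by positivity)]
  refine ⟨1 - (b ^ 2)⁻¹, sub_nonneg.2 (inv_le_one_of_one_le₀ hb2),
    sub_le_self _ (by positivity), ?_, ?_, ?_⟩
  · exact logb_two_sub_one_le_of_le_two_mul (by positivity)
      (one_add_le_two_mul_one_add_sinr hα hb2 (by gcongr; linarith))
  · exact logb_two_sub_one_le_of_le_two_mul (by positivity)
      (one_add_le_two_mul_one_add_sinr hα hb2 (by gcongr; exact min_le_right _ _))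
  · exact logb_two_sub_logb_two_sub_one_le (by positivity) (by positivity)
      (one_add_le_two_mul_one_add_mul_one_add hα (by positivity) (sq_nonneg _) (by gcongr))

/-- Existence of a relay power allocation `α ∈ [0, 1]` satisfying all three
downlink decoding conditions within the claimed gaps, for the two-way Gaussian
relay channel of Theorem 2. -/
theorem exists_alpha_downlink (hA1 hB1 h1A h1B : ℝ)
    (hhA1 : 1 ≤ hA1) (hhB1 : 1 ≤ hB1) (hh1A : 1 ≤ h1A) (hh1B : 1 ≤ h1B)
    (hle : min hB1 h1A ≤ min hA1 h1B) :
    ∃ α : ℝ, 0 ≤ α ∧ α ≤ 1 ∧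
      logb 2 (1 + α * h1B ^ 2 / (1 + (1 - α) * h1B ^ 2)) ≥
        logb 2 (1 + (min hB1 h1A) ^ 2) - 1 ∧
      logb 2 (1 + α * h1A ^ 2 / (1 + (1 - α) * h1A ^ 2)) ≥
        logb 2 (1 + (min hB1 h1A) ^ 2) - 1 ∧
      logb 2 (1 + (1 - α) * h1B ^ 2) ≥
        logb 2 (1 + (min hA1 h1B) ^ 2) - logb 2 (1 + (min hB1 h1A) ^ 2) - 1 :=
  exists_alpha_downlink_general hA1 hB1 h1A h1B hhB1 hh1A hle
end

section
/- Let a, b, c be real numbers, each at least 1, with 1 + a² ≥ (1 + c²)(1 + b²), and set α² = b²/(1 + b²). Then log₂(α²·a²/(2(1 − α²)·a² + 1)) ≥ log₂(1 + b²) − 1 − log₂ 3. -/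
open Real

/-- Gap verification of the uplink decoding condition (g2) at relay `R₁` in
the symmetric two-way Gaussian diamond channel of Theorem 3, with power split
`α² = b²/(1 + b²)`. -/
theorem g2_gap (a b c : ℝ) (ha : 1 ≤ a) (hb : 1 ≤ b) (hc : 1 ≤ c)
    (hcut : 1 + a ^ 2 ≥ (1 + c ^ 2) * (1 + b ^ 2))
    (α2 : ℝ) (hα2 : α2 = b ^ 2 / (1 + b ^ 2)) :
    logb 2 (α2 * a ^ 2 / (2 * (1 - α2) * a ^ 2 + 1)) ≥
      logb 2 (1 + b ^ 2) - 1 - logb 2 3 := by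
  have hb2 : (0:ℝ) < 1 + b ^ 2 := by positivity
  have hc1 : (0:ℝ) ≤ c ^ 2 - 1 := by nlinarith
  have ha2 : a ^ 2 ≥ 1 + 2 * b ^ 2 := by nlinarith [mul_nonneg hc1 hb2.le]
  have harg : α2 * a ^ 2 / (2 * (1 - α2) * a ^ 2 + 1)
      = b ^ 2 * a ^ 2 / (2 * a ^ 2 + 1 + b ^ 2) := by
    rw [hα2]
    rw [show 2 * (1 - b ^ 2 / (1 + b ^ 2)) * a ^ 2 + 1
        = (2 * a ^ 2 + 1 + b ^ 2) / (1 + b ^ 2) from by field_simp; ring]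
    have h1 : (2 * a ^ 2 + 1 + b ^ 2) ≠ 0 := by positivity
    field_simp
  have h22 : logb 2 (2:ℝ) = 1 := by simp
  have hRHS : logb 2 (1 + b ^ 2) - 1 - logb 2 3 = logb 2 ((1 + b ^ 2) / 6) := by
    rw [Real.logb_div (ne_of_gt hb2) (by norm_num),
      show (6:ℝ) = 2 * 3 from by norm_num,
      Real.logb_mul (by norm_num) (by norm_num), h22]
    ring
  rw [harg, hRHS]
  apply (Real.logb_le_logb (by norm_num) (by positivity) (by positivity)).mpr
  rw [div_le_div_iff₀ (by norm_num) (by positivity)]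
  nlinarith [mul_le_mul_of_nonneg_left ha2 (show (0:ℝ) ≤ 4*b^2-2 by nlinarith), sq_nonneg (b^2-1), sq_nonneg b, hb]
end

section
/- Let a, b, c, d be real numbers, each at least 1, satisfying 1 + a² ≥ (1 + c²)(1 + b²) and 1 + d² ≥ (1 + c²)(1 + b²), and set α² = b²/(1 + b²). Then min{log₂(α²·a²/(2(1 − α²)·a² + 1)), log₂(α²·b²/((1 − α²)·b² + 1)), log₂(1 + d²/c²)} + min{log₂((1 − α²)·a²), log₂(1 + c²)} ≥ log₂(1 + c²) + log₂(1 + b²) − 4. -/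
/-!
With `α² = b²/(1 + b²)` every argument of the first minimum is at least `(1 + b²)/8` and every
argument of the second at least `(1 + c²)/2`: both follow from the cut-set hypotheses, which give
`a² ≥ b²`, `d²/c² ≥ 1 + b²` and `a²/(1 + b²) ≥ (1 + c²) - 1/(1 + b²)`. Taking `log₂` loses
3 bits in the first minimum and 1 bit in the second.
-/

open Real

theorem Real.logb_sub_le_logb_of_div_pow_le {b x y : ℝ} {n : ℕ} (hb : 1 < b) (hx : 0 < x)
    (h : x / b ^ n ≤ y) : logb b x - n ≤ logb b y := by
  have hpos : 0 < x / b ^ n := div_pos hx (pow_pos (by linarith) n)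
  calc logb b x - n = logb b (x / b ^ n) := by
        rw [logb_div hx.ne' (pow_pos (by linarith) n).ne', logb_pow, logb_self_eq_one hb, mul_one]
    _ ≤ logb b y := logb_le_logb_of_le hb hpos h

section PowerSplit

variable {B X k : ℝ}

theorem powerSplit_mul_div_eq (hB : 1 + B ≠ 0) :
    B / (1 + B) * X / (k * (1 - B / (1 + B)) * X + 1) = B * X / (k * X + 1 + B) := by
  rw [one_sub_div hB, add_sub_cancel_right]
  field_simp
  ring_nf

theorem one_add_div_eight_le_mul_div (hB : 1 ≤ B) (hBX : B ≤ X) (hk : 0 ≤ k) (hk2 : k ≤ 2) :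
    (1 + B) / 8 ≤ B * X / (k * X + 1 + B) := by
  have hX : 0 ≤ X := by linarith
  rw [div_le_div_iff₀ (by norm_num) (by positivity)]
  calc (1 + B) * (k * X + 1 + B) ≤ (1 + B) * (2 * X + 1 + B) := by gcongr
    _ ≤ B * X * 8 := by nlinarith

theorem one_add_div_two_le_one_sub_powerSplit_mul {A C : ℝ} (hB : 1 ≤ B) (hC : 0 ≤ C)
    (hcut : (1 + C) * (1 + B) ≤ 1 + A) : (1 + C) / 2 ≤ (1 - B / (1 + B)) * A := by
  rw [one_sub_div (by positivity), add_sub_cancel_right, one_div_mul_eq_div,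
    div_le_div_iff₀ (by norm_num) (by positivity)]
  nlinarith

end PowerSplit

theorem four_bit_gap_general (a b c d : ℝ)
    (hb : 1 ≤ b) (hc : 1 ≤ c)
    (hcut1 : 1 + a ^ 2 ≥ (1 + c ^ 2) * (1 + b ^ 2))
    (hcut2 : 1 + d ^ 2 ≥ (1 + c ^ 2) * (1 + b ^ 2))
    (α2 : ℝ) (hα2 : α2 = b ^ 2 / (1 + b ^ 2)) :
    min (logb 2 (α2 * a ^ 2 / (2 * (1 - α2) * a ^ 2 + 1)))
        (min (logb 2 (α2 * b ^ 2 / ((1 - α2) * b ^ 2 + 1)))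
          (logb 2 (1 + d ^ 2 / c ^ 2))) +
      min (logb 2 ((1 - α2) * a ^ 2)) (logb 2 (1 + c ^ 2)) ≥
    logb 2 (1 + c ^ 2) + logb 2 (1 + b ^ 2) - 4 := by
  subst hα2
  have hB : 1 ≤ b ^ 2 := one_le_pow₀ hb
  have hC : 0 < c ^ 2 := by positivity
  have hBA : b ^ 2 ≤ a ^ 2 := by nlinarith
  have hBD : 1 + b ^ 2 ≤ d ^ 2 / c ^ 2 := by rw [le_div_iff₀ hC]; nlinarith
  calc logb 2 (1 + c ^ 2) + logb 2 (1 + b ^ 2) - 4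
        = (logb 2 (1 + b ^ 2) - (3 : ℕ)) + (logb 2 (1 + c ^ 2) - (1 : ℕ)) := by push_cast; ring
    _ ≤ _ := by
      refine add_le_add (le_min ?_ (le_min ?_ ?_)) (le_min ?_ (by simp)) <;>
        refine logb_sub_le_logb_of_div_pow_le one_lt_two (by positivity) ?_ <;> norm_num
      · rw [powerSplit_mul_div_eq (by positivity)]
        exact one_add_div_eight_le_mul_div hB hBA zero_le_two le_rfl
      · have h := one_add_div_eight_le_mul_div hB le_rfl zero_le_one one_le_two
        rwa [← powerSplit_mul_div_eq (by positivity), one_mul] at h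
      · linarith
      · exact one_add_div_two_le_one_sub_powerSplit_mul hB hC.le (by linarith)

/-- The achievable rate `R_u + R_v` in the symmetric two-way Gaussian diamond
channel of Theorem 3 is within 4 bits of the cut-set bound
`log₂(1 + c²) + log₂(1 + b²)` in each direction. -/
theorem four_bit_gap (a b c d : ℝ)
    (ha : 1 ≤ a) (hb : 1 ≤ b) (hc : 1 ≤ c) (hd : 1 ≤ d)
    (hcut1 : 1 + a ^ 2 ≥ (1 + c ^ 2) * (1 + b ^ 2))
    (hcut2 : 1 + d ^ 2 ≥ (1 + c ^ 2) * (1 + b ^ 2))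
    (α2 : ℝ) (hα2 : α2 = b ^ 2 / (1 + b ^ 2)) :
    min (logb 2 (α2 * a ^ 2 / (2 * (1 - α2) * a ^ 2 + 1)))
        (min (logb 2 (α2 * b ^ 2 / ((1 - α2) * b ^ 2 + 1)))
          (logb 2 (1 + d ^ 2 / c ^ 2))) +
      min (logb 2 ((1 - α2) * a ^ 2)) (logb 2 (1 + c ^ 2)) ≥
    logb 2 (1 + c ^ 2) + logb 2 (1 + b ^ 2) - 4 :=
  four_bit_gap_general a b c d hb hc hcut1 hcut2 α2 hα2
end
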